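/- arXiv:1511.07832 — 3 statements merged into one kernel-verified Lean document; each statement's English description precedes it below -/
import Mathlib

section
/- Let X be a finite subset of S^1, 0 < r ≤ 1, and suppose all periodic orbits of f_r : X → X have winding number w and length ℓ. Then for every x ∈ X, the limit lim_{n→∞} (1/n) Σ_{i=0}^{n-1} d⃗(f_r^i(x), f_r^{i+1}(x)) exists and equals w/ℓ. In particular w/ℓ < r. -/
open Filter

noncomputable section

instance : Fact ((0:ℝ) < 1) := ⟨zero_lt_one⟩

/-- Clockwise distance on the circle `S¹ = ℝ/ℤ`: the representative of `y - x` in `[0,1)`. -/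
noncomputable def cdist (x y : AddCircle (1:ℝ)) : ℝ :=
  ((AddCircle.equivIco 1 0) (y - x)).1

/-- `f` is the cyclic dynamical system map `f_r` on the finite set `X`. -/
def IsCyclicMap (X : Finset (AddCircle (1:ℝ))) (r : ℝ)
    (f : AddCircle (1:ℝ) → AddCircle (1:ℝ)) : Prop :=
  ∀ x ∈ X, f x ∈ X ∧ cdist x (f x) < r ∧
    ∀ y ∈ X, cdist x y < r → cdist x y ≤ cdist x (f x)

/-- The winding number of the periodic orbit through `x` of length `ℓ`. -/
noncomputable def winding (f : AddCircle (1:ℝ) → AddCircle (1:ℝ))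
    (x : AddCircle (1:ℝ)) (ℓ : ℕ) : ℝ :=
  ∑ i ∈ Finset.range ℓ, cdist (f^[i] x) (f^[i+1] x)

/-!
The average displacement along an orbit is the Birkhoff average of `y ↦ cdist y (f y)`. As `X`
is finite and `f`-invariant, every orbit eventually enters a periodic orbit. On a periodic orbit of
period `p` the Birkhoff sums grow by exactly the winding number every `p` steps, so their deviation
from linear growth is `p`-periodic, hence bounded, and the averages converge to `winding / p`; for
a bounded function, shifting the starting point along the orbit does not change the limit. Every
step is shorter than `r`, so an orbit of period `p` winds less than `p r`.
-/

open Function Set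

section BirkhoffAverage

variable (𝕜 : Type*) {α E : Type*} [RCLike 𝕜] [NormedAddCommGroup E] [NormedSpace 𝕜 E]

theorem Function.IsPeriodicPt.tendsto_birkhoffAverage {f : α → α} {x : α} {n : ℕ}
    (h : IsPeriodicPt f n x) (hn : 0 < n) (g : α → E) :
    Tendsto (birkhoffAverage 𝕜 f g · x) atTop (nhds (birkhoffAverage 𝕜 f g n x)) := by
  set c := birkhoffAverage 𝕜 f g n x
  set e : ℕ → E := fun k ↦ birkhoffSum f g k x - (k : 𝕜) • c
  have hsum : (n : 𝕜) • c = birkhoffSum f g n x := by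
    simp only [c, birkhoffAverage, smul_smul]
    rw [mul_inv_cancel₀ (by exact_mod_cast hn.ne'), one_smul]
  have he : Periodic e n := fun k ↦ by
    simp only [e, add_comm k n, birkhoffSum_add, h.eq, Nat.cast_add, add_smul, hsum]
    abel
  have he_bdd : IsBoundedUnder (· ≤ ·) atTop (norm ∘ e) := by
    have hfin : (range e).Finite := ((finite_Iio n).image e).subset <| by
      rintro _ ⟨k, rfl⟩
      exact ⟨k % n, Nat.mod_lt k hn, he.map_mod_nat k⟩
    obtain ⟨C, hC⟩ := isBounded_iff_forall_norm_le.1 hfin.isBounded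
    exact isBoundedUnder_of ⟨C, fun k ↦ hC _ ⟨k, rfl⟩⟩
  have hlim : Tendsto (fun k : ℕ ↦ c + (k : 𝕜)⁻¹ • e k) atTop (nhds c) := by
    simpa using tendsto_const_nhds.add
      ((tendsto_inv_atTop_nhds_zero_nat (𝕜 := 𝕜)).zero_smul_isBoundedUnder_le he_bdd)
  refine hlim.congr' <| (eventually_ne_atTop 0).mono fun k hk ↦ ?_
  simp only [e, birkhoffAverage, smul_sub, smul_smul]
  rw [inv_mul_cancel₀ (by exact_mod_cast hk), one_smul]
  abel

theorem tendsto_birkhoffAverage_iterate_sub_birkhoffAverage {g : α → E}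
    (hg : Bornology.IsBounded (range g)) (f : α → α) (x : α) (m : ℕ) :
    Tendsto (fun n ↦ birkhoffAverage 𝕜 f g n (f^[m] x) - birkhoffAverage 𝕜 f g n x) atTop
      (nhds 0) := by
  induction m with
  | zero => simp
  | succ m ih =>
    simpa only [iterate_succ_apply', sub_add_sub_cancel, add_zero] using
      (tendsto_birkhoffAverage_apply_sub_birkhoffAverage' 𝕜 hg f (f^[m] x)).add ih

theorem tendsto_birkhoffAverage_of_isPeriodicPt_iterate {g : α → E}
    (hg : Bornology.IsBounded (range g)) {f : α → α} {x : α} {m n : ℕ}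
    (h : IsPeriodicPt f n (f^[m] x)) (hn : 0 < n) :
    Tendsto (birkhoffAverage 𝕜 f g · x) atTop (nhds (birkhoffAverage 𝕜 f g n (f^[m] x))) := by
  simpa using (h.tendsto_birkhoffAverage 𝕜 hn g).sub
    (tendsto_birkhoffAverage_iterate_sub_birkhoffAverage 𝕜 hg f x m)

end BirkhoffAverage

theorem Set.MapsTo.exists_iterate_mem_periodicPts {α : Type*} {f : α → α} {s : Set α}
    (hf : MapsTo f s s) (hs : s.Finite) {x : α} (hx : x ∈ s) :
    ∃ m, f^[m] x ∈ periodicPts f := by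
  obtain ⟨a, b, hab, heq⟩ := hs.exists_lt_map_eq_of_forall_mem fun k ↦ hf.iterate k hx
  refine ⟨a, b - a, Nat.sub_pos_of_lt hab, ?_⟩
  rw [IsPeriodicPt, IsFixedPt, ← iterate_add_apply, Nat.sub_add_cancel hab.le, heq]

theorem cdist_nonneg (x y : AddCircle (1:ℝ)) : 0 ≤ cdist x y :=
  ((AddCircle.equivIco 1 0) (y - x)).2.1

theorem cdist_lt_one (x y : AddCircle (1:ℝ)) : cdist x y < 1 :=
  lt_of_lt_of_eq ((AddCircle.equivIco 1 0) (y - x)).2.2 (zero_add 1)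

section Winding

variable {f : AddCircle (1:ℝ) → AddCircle (1:ℝ)}

theorem winding_eq_birkhoffSum (x : AddCircle (1:ℝ)) (n : ℕ) :
    winding f x n = birkhoffSum f (fun y ↦ cdist y (f y)) n x := by
  simp only [winding, birkhoffSum, iterate_succ_apply']

theorem tendsto_winding_div_of_iterate_mem_periodicPts {x : AddCircle (1:ℝ)} {m : ℕ}
    (hm : f^[m] x ∈ periodicPts f) :
    Tendsto (fun n : ℕ ↦ (1 / (n : ℝ)) * winding f x n) atTop
      (nhds (winding f (f^[m] x) (minimalPeriod f (f^[m] x)) / minimalPeriod f (f^[m] x))) := by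
  have hbdd : Bornology.IsBounded (range fun y ↦ cdist y (f y)) :=
    (Metric.isBounded_Icc (0 : ℝ) 1).subset <| by
      rintro _ ⟨y, rfl⟩
      exact ⟨cdist_nonneg _ _, (cdist_lt_one _ _).le⟩
  simpa only [birkhoffAverage, winding_eq_birkhoffSum, smul_eq_mul, div_eq_inv_mul, mul_one] using
    tendsto_birkhoffAverage_of_isPeriodicPt_iterate ℝ hbdd (isPeriodicPt_minimalPeriod f _)
      (minimalPeriod_pos_of_mem_periodicPts hm)

variable {X : Finset (AddCircle (1:ℝ))} {r : ℝ}

theorem IsCyclicMap.mapsTo (hf : IsCyclicMap X r f) : MapsTo f X X :=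
  fun x hx ↦ (hf x hx).1

theorem IsCyclicMap.winding_lt (hf : IsCyclicMap X r f) {x : AddCircle (1:ℝ)} (hx : x ∈ X)
    {n : ℕ} (hn : 0 < n) : winding f x n < n * r :=
  calc winding f x n < ∑ _i ∈ Finset.range n, r :=
        Finset.sum_lt_sum_of_nonempty (Finset.nonempty_range_iff.2 hn.ne') fun i _ ↦ by
          rw [iterate_succ_apply']
          exact (hf _ (hf.mapsTo.iterate i hx)).2.1
    _ = n * r := by simp

end Winding

theorem winding_fraction_limit_general
    (X : Finset (AddCircle (1:ℝ))) (hX : X.Nonempty)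
    (r : ℝ)
    (f : AddCircle (1:ℝ) → AddCircle (1:ℝ)) (hf : IsCyclicMap X r f)
    (w ℓ : ℕ)
    (hper : ∀ x ∈ X, (∃ i, 1 ≤ i ∧ f^[i] x = x) →
      Function.minimalPeriod f x = ℓ ∧ winding f x ℓ = w) :
    (∀ x ∈ X,
      Tendsto (fun n : ℕ =>
          (1 / (n : ℝ)) * ∑ i ∈ Finset.range n, cdist (f^[i] x) (f^[i+1] x))
        atTop (nhds ((w : ℝ) / ℓ))) ∧
    (w : ℝ) / ℓ < r := by
  have hcycle : ∀ x ∈ X, ∃ m, f^[m] x ∈ periodicPts f ∧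
      minimalPeriod f (f^[m] x) = ℓ ∧ winding f (f^[m] x) ℓ = w := by
    intro x hx
    obtain ⟨m, i, hi, hpt⟩ := hf.mapsTo.exists_iterate_mem_periodicPts X.finite_toSet hx
    exact ⟨m, ⟨i, hi, hpt⟩, hper _ (hf.mapsTo.iterate m hx) ⟨i, hi, hpt⟩⟩
  refine ⟨fun x hx ↦ ?_, ?_⟩
  · obtain ⟨m, hm, hℓ, hw⟩ := hcycle x hx
    have hlim := tendsto_winding_div_of_iterate_mem_periodicPts hm
    rw [hℓ, hw] at hlim
    exact hlim
  · obtain ⟨x, hx⟩ := hX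
    obtain ⟨m, hm, hℓ, hw⟩ := hcycle x hx
    have hℓpos : 0 < ℓ := hℓ ▸ minimalPeriod_pos_of_mem_periodicPts hm
    rw [div_lt_iff₀ (by exact_mod_cast hℓpos), mul_comm, ← hw]
    exact hf.winding_lt (hf.mapsTo.iterate m hx) hℓpos

/-- If all periodic orbits of `f_r : X → X` have winding number `w` and length `ℓ`, then for
every `x ∈ X` the average clockwise displacement converges to `w/ℓ`; in particular `w/ℓ < r`. -/
theorem winding_fraction_limit
    (X : Finset (AddCircle (1:ℝ))) (hX : X.Nonempty)
    (r : ℝ) (hr0 : 0 < r) (hr1 : r ≤ 1)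
    (f : AddCircle (1:ℝ) → AddCircle (1:ℝ)) (hf : IsCyclicMap X r f)
    (w ℓ : ℕ) (hℓ : 1 ≤ ℓ)
    (hper : ∀ x ∈ X, (∃ i, 1 ≤ i ∧ f^[i] x = x) →
      Function.minimalPeriod f x = ℓ ∧ winding f x ℓ = w) :
    (∀ x ∈ X,
      Tendsto (fun n : ℕ =>
          (1 / (n : ℝ)) * ∑ i ∈ Finset.range n, cdist (f^[i] x) (f^[i+1] x))
        atTop (nhds ((w : ℝ) / ℓ))) ∧
    (w : ℝ) / ℓ < r :=
  winding_fraction_limit_general X hX r f hf w ℓ hper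
end
end

section
/- Let C'_{i,h} count lattice paths from (0,0) with i+h up-steps (1,1) and i down-steps (1,−1) staying in the strip 0 ≤ y ≤ h. Then C'_{0,h} = 1, C'_{n+1,h} = Σ_{j=0}^{n+1} C'_{j,h−1} C_{n+1−j,h} for h ≥ 1, and the generating functions satisfy C'_h(x) = C'_{h−1}(x)·C_h(x). Evaluation at x = 1/4 gives C'_h(1/4) = 2^{h+1}/(h+2), i.e. Σ_{i≥0} C'_{i,h}/4^i = 2^{h+1}/(h+2). -/
/-- Height of the lattice path encoded by `s` after `j` steps. -/
def pathHeight {n : ℕ} (s : Fin n → Bool) (j : ℕ) : ℤ :=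
  ∑ t ∈ Finset.range j, if h : t < n then (if s ⟨t, h⟩ then 1 else -1) else 0

/-- `C_{i,h}`: the number of Dyck paths of order `i` with height at most `h`. -/
noncomputable def boundedDyck (i h : ℕ) : ℕ :=
  Nat.card {s : Fin (2*i) → Bool //
    (∀ j ≤ 2*i, 0 ≤ pathHeight s j ∧ pathHeight s j ≤ (h : ℤ)) ∧
    pathHeight s (2*i) = 0}

/-- `C'_{i,h}`: the number of lattice paths from `(0,0)` with `i+h` up-steps and `i`
down-steps staying in the strip `0 ≤ y ≤ h`. -/
noncomputable def boundedDyck' (i h : ℕ) : ℕ :=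
  Nat.card {s : Fin (2*i+h) → Bool //
    (∀ j ≤ 2*i+h, 0 ≤ pathHeight s j ∧ pathHeight s j ≤ (h : ℤ)) ∧
    pathHeight s (2*i+h) = (h : ℤ)}

/-- The generating function `C_h(x) = Σ_i C_{i,h} x^i`. -/
noncomputable def boundedDyckGF (h : ℕ) (x : ℝ) : ℝ :=
  ∑' i : ℕ, (boundedDyck i h : ℝ) * x ^ i

/-- The generating function `C'_h(x) = Σ_i C'_{i,h} x^i`. -/
noncomputable def boundedDyckGF' (h : ℕ) (x : ℝ) : ℝ :=
  ∑' i : ℕ, (boundedDyck' i h : ℝ) * x ^ i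

/-!
Cutting a path from `0` to `h + 1` in the strip `[0, h + 1]` at its first visit to `h + 1` leaves
a path from `0` to `h` in `[0, h]`, an up-step, and a path from `h + 1` back to `h + 1`, which the
reflection `y ↦ h + 1 - y` turns into a Dyck path of height at most `h + 1`; this gives
`C'_{h+1} = C'_h C_{h+1}`. The same cut, applied after the first step to the reflection of a Dyck
path, is the first-return decomposition `C_{h+1} = 1 + x C_h C_{h+1}`. At `x = 1/4` its fixed
point `2(h+2)/(h+3)` bounds the partial sums, so `C_h(1/4) = 2(h+1)/(h+2)` by induction, and then
`C'_h(1/4) = ∏_{k=1}^{h} 2(k+1)/(k+2) = 2^{h+1}/(h+2)`.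
-/

open Finset

lemma sum_range_eq_sum_range_two_mul_add {M : Type*} [AddCommMonoid M] {g : ℕ → M}
    {N K d : ℕ} (hN : 2 * K + d = N + 1) (hg : ∀ i < N, g i ≠ 0 → ∃ k, i = 2 * k + d) :
    ∑ i ∈ range N, g i = ∑ k ∈ range K, g (2 * k + d) := by
  symm
  refine sum_bij_ne_zero (fun k _ _ => 2 * k + d) (fun k hk _ => ?_) (fun _ _ _ _ _ _ => by omega)
    (fun i hi hgi => ?_) (fun _ _ _ => rfl)
  · simp only [mem_range] at hk ⊢
    omega
  · obtain ⟨k, rfl⟩ := hg i (mem_range.mp hi) hgi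
    exact ⟨k, mem_range.mpr (by simp only [mem_range] at hi; omega), hgi, rfl⟩

lemma sum_range_convolution_le {R : Type*} [CommSemiring R] [PartialOrder R] [IsOrderedRing R]
    {a b : ℕ → R} (ha : ∀ n, 0 ≤ a n) (hb : ∀ n, 0 ≤ b n) (N : ℕ) :
    ∑ n ∈ range N, ∑ j ∈ range (n + 1), a j * b (n - j) ≤
      (∑ n ∈ range N, a n) * ∑ n ∈ range N, b n := by
  rw [sum_range_diag_flip N fun j k => a j * b k, sum_mul]
  refine sum_le_sum fun n _ => ?_
  rw [← mul_sum]
  exact mul_le_mul_of_nonneg_left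
    (sum_le_sum_of_subset_of_nonneg (range_subset_range.mpr (Nat.sub_le N n))
      fun k _ _ => hb k) (ha n)

/-- `f` solves the renewal equation `f = 1 + c · (a ⋆ f)`; its partial sums stay below the fixed
point `B` of `S ↦ 1 + c A S`, which is then also the sum. -/
lemma hasSum_of_renewal {a f : ℕ → ℝ} {A B c : ℝ} (ha : HasSum a A) (ha0 : ∀ n, 0 ≤ a n)
    (hf0 : ∀ n, 0 ≤ f n) (hc : 0 ≤ c) (hB0 : 0 ≤ B) (hB : 1 + c * A * B = B) (hf_zero : f 0 = 1)
    (hf_succ : ∀ n, f (n + 1) = c * ∑ j ∈ range (n + 1), a j * f (n - j)) : HasSum f B := by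
  have hA0 : 0 ≤ A := ha.nonneg ha0
  have hpartial : ∀ N, ∑ n ∈ range N, f n ≤ B := by
    intro N
    induction N with
    | zero => simpa using hB0
    | succ N ih =>
      calc ∑ n ∈ range (N + 1), f n
          = 1 + c * ∑ n ∈ range N, ∑ j ∈ range (n + 1), a j * f (n - j) := by
            rw [sum_range_succ', hf_zero, mul_sum, add_comm]
            simp only [hf_succ]
        _ ≤ 1 + c * ((∑ n ∈ range N, a n) * ∑ n ∈ range N, f n) := by
            gcongr
            exact sum_range_convolution_le ha0 hf0 N
        _ ≤ 1 + c * (A * B) := by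
            gcongr
            · exact sum_nonneg fun n _ => hf0 n
            · exact sum_le_hasSum _ (fun n _ => ha0 n) ha
        _ = B := by rw [← mul_assoc, hB]
  have hf : Summable f := summable_of_sum_range_le hf0 hpartial
  have hS : ∑' n, f n = 1 + c * A * ∑' n, f n := by
    conv_lhs => rw [hf.tsum_eq_zero_add, hf_zero]
    simp only [hf_succ, tsum_mul_left]
    rw [(hasSum_sum_range_mul_of_summable_norm (summable_norm_iff (E := ℝ) |>.mpr ha.summable)
      (summable_norm_iff (E := ℝ) |>.mpr hf)).tsum_eq, ha.tsum_eq, mul_assoc]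
  have hcA : 1 - c * A ≠ 0 := by
    intro h0
    rw [show c * A = 1 by linarith] at hB
    linarith
  have hSB : (∑' n, f n - B) * (1 - c * A) = 0 := by linear_combination hS + hB
  rw [← sub_eq_zero.mp ((mul_eq_zero.mp hSB).resolve_right hcA)]
  exact hf.hasSum

lemma summable_norm_mul_pow_of_abs_le {c : ℕ → ℕ} {r x : ℝ}
    (hc : Summable fun i => (c i : ℝ) * r ^ i) (hx : |x| ≤ r) :
    Summable fun i => ‖(c i : ℝ) * x ^ i‖ :=
  hc.of_nonneg_of_le (fun _ => norm_nonneg _) fun i => by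
    rw [norm_mul, norm_pow, Real.norm_natCast, Real.norm_eq_abs]
    exact mul_le_mul_of_nonneg_left (pow_le_pow_left₀ (abs_nonneg x) hx i) (Nat.cast_nonneg _)

lemma hasSum_mul_pow_of_eq_convolution {a b c : ℕ → ℕ}
    (hc : ∀ n, c n = ∑ j ∈ range (n + 1), a j * b (n - j)) {x : ℝ}
    (ha : Summable fun n => ‖(a n : ℝ) * x ^ n‖) (hb : Summable fun n => ‖(b n : ℝ) * x ^ n‖) :
    HasSum (fun n => (c n : ℝ) * x ^ n) ((∑' n, (a n : ℝ) * x ^ n) * ∑' n, (b n : ℝ) * x ^ n) := by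
  have hterm (n : ℕ) : (c n : ℝ) * x ^ n =
      ∑ j ∈ range (n + 1), (a j : ℝ) * x ^ j * ((b (n - j) : ℝ) * x ^ (n - j)) := by
    rw [hc, Nat.cast_sum, sum_mul]
    refine sum_congr rfl fun j hj => ?_
    rw [← pow_sub_mul_pow x (Nat.le_of_lt_succ (mem_range.mp hj))]
    push_cast
    ring
  simpa only [hterm] using hasSum_sum_range_mul_of_summable_norm ha hb

/-- The number of `±1` paths of `m` steps from `a` to `b` whose heights after every step lie in
`[0, h]`; the starting height `a` is not constrained. -/
def stripCount (h : ℕ) : ℕ → ℤ → ℤ → ℕ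
  | 0, a, b => if a = b then 1 else 0
  | m + 1, a, b =>
      if 0 ≤ b ∧ b ≤ h then stripCount h m a (b - 1) + stripCount h m a (b + 1) else 0

section stripCount

variable {h m : ℕ} {a b : ℤ}

@[simp] lemma stripCount_zero : stripCount h 0 a b = if a = b then 1 else 0 := rfl

lemma stripCount_succ : stripCount h (m + 1) a b =
    if 0 ≤ b ∧ b ≤ h then stripCount h m a (b - 1) + stripCount h m a (b + 1) else 0 := rfl

lemma stripCount_succ_eq_zero (hb : ¬(0 ≤ b ∧ b ≤ h)) : stripCount h (m + 1) a b = 0 :=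
  if_neg hb

lemma exists_eq_add_two_mul_of_stripCount_ne_zero :
    ∀ {m : ℕ} {b : ℤ}, stripCount h m a b ≠ 0 → ∃ k : ℕ, a + m = b + 2 * k
  | 0, b, hab => ⟨0, by simp_all⟩
  | m + 1, b, hab => by
    have : stripCount h m a (b - 1) ≠ 0 ∨ stripCount h m a (b + 1) ≠ 0 := by
      rw [stripCount_succ] at hab
      split_ifs at hab <;> omega
    rcases this with hdown | hup
    · obtain ⟨k, hk⟩ := exists_eq_add_two_mul_of_stripCount_ne_zero hdown
      exact ⟨k, by push_cast; linarith⟩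
    · obtain ⟨k, hk⟩ := exists_eq_add_two_mul_of_stripCount_ne_zero hup
      exact ⟨k + 1, by push_cast; linarith⟩

lemma stripCount_reflect : ∀ {m : ℕ} {b : ℤ}, stripCount h m a b = stripCount h m (h - a) (h - b)
  | 0, b => by simp
  | m + 1, b => by
    rw [stripCount_succ, stripCount_succ, add_comm (stripCount h m _ _),
      stripCount_reflect (b := b - 1), stripCount_reflect (b := b + 1),
      show (h : ℤ) - (b - 1) = h - b + 1 by ring, show (h : ℤ) - (b + 1) = h - b - 1 by ring]
    congr 1
    apply propext
    omega

lemma stripCount_top_eq_bottom : stripCount h m h h = stripCount h m 0 0 := by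
  rw [stripCount_reflect]
  simp

lemma stripCount_succ_start_zero :
    ∀ {m : ℕ} {b : ℤ}, stripCount (h + 1) (m + 1) 0 b = stripCount (h + 1) m 1 b
  | 0 => by
    simp only [stripCount_succ, stripCount_zero]
    split_ifs <;> omega
  | m + 1 => by
    rw [stripCount_succ, stripCount_succ_start_zero, stripCount_succ_start_zero, ← stripCount_succ]

/-- Cut at the first visit to the top `h + 1`: the first term counts the paths that never get
there. -/
lemma stripCount_succ_first_passage (ha : a ≤ h) : ∀ (m : ℕ) (y : ℤ),
    stripCount (h + 1) (m + 1) a y = stripCount h (m + 1) a y +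
      ∑ p ∈ antidiagonal m, stripCount h p.1 a h * stripCount (h + 1) p.2 (h + 1) y
  | 0, y => by
    simp only [stripCount_succ, stripCount_zero, Nat.antidiagonal_zero, sum_singleton]
    push_cast
    split_ifs <;> omega
  | m + 1, y => by
    have hS : ∑ p ∈ antidiagonal m, stripCount h p.1 a h * stripCount (h + 1) (p.2 + 1) (h + 1) y
        = if 0 ≤ y ∧ y ≤ h + 1 then
            ∑ p ∈ antidiagonal m, stripCount h p.1 a h * stripCount (h + 1) p.2 (h + 1) (y - 1) +
            ∑ p ∈ antidiagonal m, stripCount h p.1 a h * stripCount (h + 1) p.2 (h + 1) (y + 1)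
          else 0 := by
      simp only [stripCount_succ, Nat.cast_add, Nat.cast_one, mul_ite, mul_zero, mul_add,
        sum_ite_irrel, sum_add_distrib, sum_const_zero]
    have htop : stripCount h (m + 1) a (h + 1 + 1) = 0 := stripCount_succ_eq_zero (by omega)
    rw [Nat.sum_antidiagonal_succ', hS, stripCount_succ,
      stripCount_succ_first_passage ha m (y - 1), stripCount_succ_first_passage ha m (y + 1),
      stripCount_succ (h := h) (m := m + 1), stripCount_zero]
    push_cast
    rcases (by omega : (0 ≤ y ∧ y ≤ h) ∨ y = h + 1 ∨ ¬(0 ≤ y ∧ y ≤ h + 1)) with hy | rfl | hy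
    · simp only [if_pos hy, if_pos (⟨hy.1, by omega⟩ : 0 ≤ y ∧ y ≤ h + 1),
        if_neg (by omega : (h : ℤ) + 1 ≠ y)]
      ring
    · simp only [if_pos (by omega : 0 ≤ (h : ℤ) + 1 ∧ (h : ℤ) + 1 ≤ h + 1),
        if_neg (by omega : ¬(0 ≤ (h : ℤ) + 1 ∧ (h : ℤ) + 1 ≤ h)), ↓reduceIte, htop,
        add_sub_cancel_right]
      ring
    · simp only [if_neg hy, if_neg (by omega : ¬(0 ≤ y ∧ y ≤ h)),
        if_neg (by omega : (h : ℤ) + 1 ≠ y), mul_zero, add_zero]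

end stripCount

def stripPaths (h m : ℕ) (e : ℤ) : Set (Fin m → Bool) :=
  {s | (∀ j ≤ m, 0 ≤ pathHeight s j ∧ pathHeight s j ≤ h) ∧ pathHeight s m = e}

lemma pathHeight_snoc_of_le {m j : ℕ} (t : Fin m → Bool) (u : Bool) (hj : j ≤ m) :
    pathHeight (Fin.snoc t u : Fin (m + 1) → Bool) j = pathHeight t j := by
  refine sum_congr rfl fun x hx => ?_
  have hxm : x < m := (mem_range.mp hx).trans_le hj
  rw [dif_pos (by omega : x < m + 1), dif_pos hxm]
  exact congrArg (fun u : Bool => if u then (1 : ℤ) else -1) (Fin.snoc_castSucc (i := ⟨x, hxm⟩) ..)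

lemma pathHeight_snoc_last {m : ℕ} (t : Fin m → Bool) (u : Bool) :
    pathHeight (Fin.snoc t u : Fin (m + 1) → Bool) (m + 1) =
      pathHeight t m + if u then 1 else -1 := by
  rw [pathHeight, sum_range_succ, ← pathHeight, pathHeight_snoc_of_le t u le_rfl,
    dif_pos (Nat.lt_succ_self m)]
  exact congrArg _ (congrArg (fun u : Bool => if u then (1 : ℤ) else -1) (Fin.snoc_last ..))

lemma snoc_mem_stripPaths {h m : ℕ} {e : ℤ} (t : Fin m → Bool) (u : Bool) :
    (Fin.snoc t u : Fin (m + 1) → Bool) ∈ stripPaths h (m + 1) e ↔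
      (0 ≤ e ∧ e ≤ h) ∧ t ∈ stripPaths h m (e - if u then 1 else -1) := by
  simp only [stripPaths, Set.mem_ofPred_eq, pathHeight_snoc_last]
  constructor
  · rintro ⟨hstrip, rfl⟩
    refine ⟨by simpa [pathHeight_snoc_last] using hstrip (m + 1) le_rfl,
      fun j hj => ?_, by ring⟩
    rw [← pathHeight_snoc_of_le t u hj]
    exact hstrip j (by omega)
  · rintro ⟨he, hstrip, hend⟩
    refine ⟨fun j hj => ?_, by rw [hend]; ring⟩
    rcases Nat.lt_or_eq_of_le hj with hj | rfl
    · rw [pathHeight_snoc_of_le t u (by omega)]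
      exact hstrip j (by omega)
    · rw [pathHeight_snoc_last, hend]
      simpa using he

lemma card_stripPaths (h : ℕ) : ∀ (m : ℕ) (e : ℤ),
    Nat.card (stripPaths h m e) = stripCount h m 0 e
  | 0, e => by
    have h0 : stripPaths h 0 e = {_s | 0 = e} := by
      ext s
      simp [stripPaths, pathHeight]
    by_cases he : 0 = e <;> simp [h0, he]
  | m + 1, e => by
    have hsplit : Nat.card (stripPaths h (m + 1) e) = ∑ u : Bool, Nat.card
        {t : Fin m → Bool // (Fin.snoc t u : Fin (m + 1) → Bool) ∈ stripPaths h (m + 1) e} := by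
      rw [← Nat.card_sigma]
      exact Nat.card_congr <|
        ((Fin.snocEquiv fun _ => Bool).subtypeEquiv fun _ => Iff.rfl).symm.trans
          (Equiv.subtypeProdEquivSigmaSubtype fun u t => (Fin.snoc t u : Fin (m + 1) → Bool) ∈ _)
    simp only [snoc_mem_stripPaths] at hsplit
    rw [hsplit, stripCount_succ]
    by_cases he : 0 ≤ e ∧ e ≤ h
    · simp only [he, true_and, Fintype.sum_bool, ↓reduceIte, Bool.false_eq_true, sub_neg_eq_add]
      rw [← card_stripPaths h m (e - 1), ← card_stripPaths h m (e + 1), add_comm]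
    · simp [he]

lemma boundedDyck_eq_stripCount (i h : ℕ) : boundedDyck i h = stripCount h (2 * i) 0 0 :=
  card_stripPaths h (2 * i) 0

lemma boundedDyck'_eq_stripCount (i h : ℕ) : boundedDyck' i h = stripCount h (2 * i + h) 0 h :=
  card_stripPaths h (2 * i + h) h

lemma boundedDyck_zero_left (h : ℕ) : boundedDyck 0 h = 1 := by
  simp [boundedDyck_eq_stripCount]

lemma boundedDyck_succ_zero_right (n : ℕ) : boundedDyck (n + 1) 0 = 0 := by
  rw [boundedDyck_eq_stripCount, show 2 * (n + 1) = 2 * n + 1 + 1 by ring, stripCount_succ,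
    stripCount_succ_eq_zero (by omega), stripCount_succ_eq_zero (by omega)]
  simp

lemma boundedDyck'_zero_right (i : ℕ) : boundedDyck' i 0 = boundedDyck i 0 := by
  simp [boundedDyck'_eq_stripCount, boundedDyck_eq_stripCount]

/-- After the first up-step, reflecting turns the first return to `0` into a first passage to the
top. -/
lemma boundedDyck_succ (n h : ℕ) : boundedDyck (n + 1) (h + 1) =
    ∑ j ∈ range (n + 1), boundedDyck j h * boundedDyck (n - j) (h + 1) := by
  rw [boundedDyck_eq_stripCount, show 2 * (n + 1) = 2 * n + 1 + 1 by ring,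
    stripCount_succ_start_zero, stripCount_reflect]
  push_cast
  rw [add_sub_cancel_right, sub_zero, stripCount_succ_first_passage le_rfl,
    stripCount_succ_eq_zero (by omega), zero_add, Nat.sum_antidiagonal_eq_sum_range_succ_mk,
    sum_range_eq_sum_range_two_mul_add (K := n + 1) (d := 0) (by omega)]
  · refine sum_congr rfl fun j _ => ?_
    rw [stripCount_top_eq_bottom, ← Nat.cast_succ, stripCount_top_eq_bottom,
      boundedDyck_eq_stripCount, boundedDyck_eq_stripCount, add_zero,
      show 2 * n - 2 * j = 2 * (n - j) by omega]
  · intro i _ hi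
    obtain ⟨k, hk⟩ := exists_eq_add_two_mul_of_stripCount_ne_zero (left_ne_zero_of_mul hi)
    exact ⟨k, by omega⟩

lemma boundedDyck'_eq_sum (n h : ℕ) : boundedDyck' n (h + 1) =
    ∑ j ∈ range (n + 1), boundedDyck' j h * boundedDyck (n - j) (h + 1) := by
  rw [boundedDyck'_eq_stripCount, show 2 * n + (h + 1) = 2 * n + h + 1 by ring, Nat.cast_succ,
    stripCount_succ_first_passage (Nat.cast_nonneg h), stripCount_succ_eq_zero (by omega),
    zero_add, Nat.sum_antidiagonal_eq_sum_range_succ_mk,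
    sum_range_eq_sum_range_two_mul_add (K := n + 1) (d := h) (by omega)]
  · refine sum_congr rfl fun j _ => ?_
    rw [← Nat.cast_succ, stripCount_top_eq_bottom, boundedDyck'_eq_stripCount,
      boundedDyck_eq_stripCount, show 2 * n + h - (2 * j + h) = 2 * (n - j) by omega]
  · intro i _ hi
    obtain ⟨k, hk⟩ := exists_eq_add_two_mul_of_stripCount_ne_zero (left_ne_zero_of_mul hi)
    exact ⟨k, by omega⟩

lemma boundedDyck'_zero_left : ∀ h : ℕ, boundedDyck' 0 h = 1
  | 0 => by rw [boundedDyck'_zero_right, boundedDyck_zero_left]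
  | h + 1 => by simp [boundedDyck'_eq_sum, boundedDyck'_zero_left h, boundedDyck_zero_left]

lemma hasSum_boundedDyck_quarter : ∀ h : ℕ,
    HasSum (fun i => (boundedDyck i h : ℝ) * (1 / 4) ^ i) (2 * (h + 1) / (h + 2))
  | 0 => by
    convert hasSum_single (f := fun i => (boundedDyck i 0 : ℝ) * (1 / 4) ^ i) 0 fun i hi => ?_
    · simp [boundedDyck_zero_left]
    · obtain ⟨n, rfl⟩ := Nat.exists_eq_succ_of_ne_zero hi
      simp [boundedDyck_succ_zero_right]
  | h + 1 => by
    refine hasSum_of_renewal (c := 1 / 4) (hasSum_boundedDyck_quarter h) (fun _ => by positivity)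
      (fun _ => by positivity) (by norm_num) (by positivity) ?_ (by simp [boundedDyck_zero_left])
      fun n => ?_
    · push_cast
      field_simp
      ring
    · rw [boundedDyck_succ, mul_sum]
      push_cast
      rw [sum_mul]
      refine sum_congr rfl fun j hj => ?_
      rw [pow_succ, ← pow_sub_mul_pow (1 / 4 : ℝ) (Nat.le_of_lt_succ (mem_range.mp hj))]
      ring

lemma hasSum_boundedDyck'_quarter : ∀ h : ℕ,
    HasSum (fun i => (boundedDyck' i h : ℝ) * (1 / 4) ^ i) (2 ^ (h + 1) / (h + 2))
  | 0 => by simpa [boundedDyck'_zero_right] using hasSum_boundedDyck_quarter 0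
  | h + 1 => by
    have hx : |(1 / 4 : ℝ)| ≤ 1 / 4 := by norm_num [abs_of_pos]
    have hprod := hasSum_mul_pow_of_eq_convolution (boundedDyck'_eq_sum · h)
      (summable_norm_mul_pow_of_abs_le (hasSum_boundedDyck'_quarter h).summable hx)
      (summable_norm_mul_pow_of_abs_le (hasSum_boundedDyck_quarter (h + 1)).summable hx)
    rw [(hasSum_boundedDyck'_quarter h).tsum_eq, (hasSum_boundedDyck_quarter (h + 1)).tsum_eq]
      at hprod
    convert hprod using 1
    push_cast
    field_simp
    ring

lemma boundedDyckGF'_succ (h : ℕ) {x : ℝ} (hx : |x| ≤ 1 / 4) :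
    boundedDyckGF' (h + 1) x = boundedDyckGF' h x * boundedDyckGF (h + 1) x :=
  (hasSum_mul_pow_of_eq_convolution (boundedDyck'_eq_sum · h)
    (summable_norm_mul_pow_of_abs_le (hasSum_boundedDyck'_quarter h).summable hx)
    (summable_norm_mul_pow_of_abs_le (hasSum_boundedDyck_quarter (h + 1)).summable hx)).tsum_eq

/-- `C'_{0,h} = 1`, the recurrence `C'_{n+1,h} = Σ_{j=0}^{n+1} C'_{j,h−1} C_{n+1−j,h}` for
`h ≥ 1`, the identity `C'_h(x) = C'_{h−1}(x) C_h(x)` (for `|x|` small), and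
`C'_h(1/4) = 2^{h+1}/(h+2)`, i.e. `Σ_i C'_{i,h}/4^i = 2^{h+1}/(h+2)`. -/
theorem boundedDyck'_formulas :
    (∀ h : ℕ, boundedDyck' 0 h = 1) ∧
    (∀ n h : ℕ, 1 ≤ h →
      boundedDyck' (n+1) h =
        ∑ j ∈ Finset.range (n+2), boundedDyck' j (h-1) * boundedDyck (n+1-j) h) ∧
    (∀ h : ℕ, 1 ≤ h → ∀ x : ℝ, |x| ≤ 1/4 →
      boundedDyckGF' h x = boundedDyckGF' (h-1) x * boundedDyckGF h x) ∧
    (∀ h : ℕ, boundedDyckGF' h (1/4) = 2 ^ (h+1) / (h + 2)) ∧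
    (∀ h : ℕ, ∑' i : ℕ, (boundedDyck' i h : ℝ) / 4 ^ i = 2 ^ (h+1) / (h + 2)) := by
  have hquarter (h : ℕ) : boundedDyckGF' h (1 / 4) = 2 ^ (h + 1) / (h + 2) :=
    (hasSum_boundedDyck'_quarter h).tsum_eq
  refine ⟨boundedDyck'_zero_left, fun n h hh => ?_, fun h hh x hx => ?_, hquarter, fun h => ?_⟩
  · obtain ⟨h, rfl⟩ := Nat.exists_eq_add_of_le' hh
    exact boundedDyck'_eq_sum (n + 1) h
  · obtain ⟨h, rfl⟩ := Nat.exists_eq_add_of_le' hh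
    exact boundedDyckGF'_succ h hx
  · simpa [boundedDyckGF', div_eq_mul_one_div (boundedDyck' _ h : ℝ), one_div_pow]
      using hquarter h
end

section
/- Let X ⊆ S^1 be a finite set containing no antipodal pair (no two points at distance exactly 1/2), and let r = 1/2. Then every point of X is either periodic under f_{1/2} : X → X or lies at level 0, i.e. f_{1/2}^2(X) = f_{1/2}(X), so the image of f_{1/2} consists entirely of periodic points. -/
/-!
Every point of `f(X)` has the smallest clockwise distance to its image among the points of `X`
with the same image: if `a = f z` and `b` also maps to `y = f a` with `b` strictly closer to `y`,
then `z, a, b, y` lie in clockwise order, and since `X` has no antipodal pair one of `z`, `b` lies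
within clockwise distance `< 1/2` of the other; in either case it sees a point beyond its own image.
Hence `f` is injective on the finite set `f(X)`, which it maps into itself, so it permutes `f(X)`.
-/

noncomputable section

open Set Function

section Periodic

variable {α : Type*} {f : α → α} {s : Set α}

theorem Set.InjOn.mem_periodicPts_of_mapsTo (hs : s.Finite) (hmaps : MapsTo f s s)
    (hinj : InjOn f s) {x : α} (hx : x ∈ s) : x ∈ periodicPts f :=
  haveI := hs.to_subtype
  (show Semiconj Subtype.val (hmaps.restrict f s s) f from fun _ => rfl).mapsTo_periodicPts
    ((hmaps.restrict_inj.2 hinj).mem_periodicPts ⟨x, hx⟩)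

end Periodic

section ClockwiseDistance

variable {x y z : AddCircle (1:ℝ)}

theorem cdist_mem_Ico (x y : AddCircle (1:ℝ)) : cdist x y ∈ Ico (0:ℝ) 1 :=
  have h := (AddCircle.equivIco 1 0 (y - x)).2
  ⟨h.1, h.2.trans_eq (zero_add 1)⟩

theorem coe_cdist (x y : AddCircle (1:ℝ)) : (cdist x y : AddCircle (1:ℝ)) = y - x :=
  AddCircle.coe_equivIco

theorem cdist_eq_of_coe_eq {t : ℝ} (ht : t ∈ Ico (0:ℝ) 1) (h : (t : AddCircle (1:ℝ)) = y - x) :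
    cdist x y = t := by
  rw [cdist, ← h, AddCircle.equivIco_coe_of_mem (by simpa using ht)]

theorem cdist_left_injective (y : AddCircle (1:ℝ)) : Injective (cdist · y) := fun a b h =>
  sub_right_injective (by simpa only [coe_cdist] using congrArg ((↑) : ℝ → AddCircle (1:ℝ)) h)

theorem cdist_add_cdist (h : cdist x y + cdist y z < 1) : cdist x z = cdist x y + cdist y z :=
  cdist_eq_of_coe_eq ⟨add_nonneg (cdist_mem_Ico x y).1 (cdist_mem_Ico y z).1, h⟩
    (by rw [AddCircle.coe_add, coe_cdist, coe_cdist]; abel)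

theorem cdist_eq_sub_of_le (h : cdist y z ≤ cdist x z) : cdist x y = cdist x z - cdist y z :=
  cdist_eq_of_coe_eq ⟨sub_nonneg.2 h, by linarith [(cdist_mem_Ico x z).2, (cdist_mem_Ico y z).1]⟩
    (by rw [AddCircle.coe_sub, coe_cdist, coe_cdist]; abel)

theorem cdist_swap_of_pos (h : 0 < cdist x y) : cdist y x = 1 - cdist x y :=
  cdist_eq_of_coe_eq ⟨by linarith [(cdist_mem_Ico x y).2], by linarith⟩
    (by rw [AddCircle.coe_sub, coe_cdist, AddCircle.coe_period]; abel)

end ClockwiseDistance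

namespace IsCyclicMap

variable {X : Finset (AddCircle (1:ℝ))} {f : AddCircle (1:ℝ) → AddCircle (1:ℝ)}

theorem cdist_le_or_cdist_le (hanti : ∀ x ∈ X, ∀ y ∈ X, cdist x y ≠ 1/2)
    (hf : IsCyclicMap X (1/2) f) {x w : AddCircle (1:ℝ)} (hx : x ∈ X) (hw : w ∈ X) :
    cdist x w ≤ cdist x (f x) ∨ cdist w x ≤ cdist w (f w) := by
  rcases (cdist_mem_Ico x w).1.eq_or_lt with hzero | hpos
  · exact Or.inl (hzero ▸ (cdist_mem_Ico x (f x)).1)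
  rcases (hanti x hx w hw).lt_or_gt with hlt | hgt
  · exact Or.inl ((hf x hx).2.2 w hw hlt)
  · exact Or.inr ((hf w hw).2.2 x hx (by rw [cdist_swap_of_pos hpos]; linarith))

theorem cdist_apply_le_of_apply_eq (hanti : ∀ x ∈ X, ∀ y ∈ X, cdist x y ≠ 1/2)
    (hf : IsCyclicMap X (1/2) f) {z b : AddCircle (1:ℝ)} (hz : z ∈ X) (hb : b ∈ X)
    (hfb : f b = f (f z)) : cdist (f z) (f (f z)) ≤ cdist b (f b) := by
  set a := f z
  by_contra! hlt
  rw [hfb] at hlt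
  have hza : cdist z a < 1/2 := (hf z hz).2.1
  have hay : cdist a (f a) < 1/2 := (hf a (hf z hz).1).2.1
  have hab : cdist a b = cdist a (f a) - cdist b (f a) := cdist_eq_sub_of_le hlt.le
  have hby := (cdist_mem_Ico b (f a)).1
  have hzb : cdist z b = cdist z a + cdist a b := cdist_add_cdist (by linarith)
  rcases hf.cdist_le_or_cdist_le hanti hz hb with h | h
  · linarith
  · rw [cdist_swap_of_pos (by linarith [(cdist_mem_Ico z a).1]), hfb] at h
    linarith

theorem injOn_image (hanti : ∀ x ∈ X, ∀ y ∈ X, cdist x y ≠ 1/2) (hf : IsCyclicMap X (1/2) f) :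
    InjOn f (f '' X) := by
  rintro _ ⟨z₁, hz₁, rfl⟩ _ ⟨z₂, hz₂, rfl⟩ h
  have h₁ := hf.cdist_apply_le_of_apply_eq hanti hz₁ (hf z₂ hz₂).1 h.symm
  have h₂ := hf.cdist_apply_le_of_apply_eq hanti hz₂ (hf z₁ hz₁).1 h
  rw [h] at h₁ h₂
  exact cdist_left_injective _ (le_antisymm h₁ h₂)

end IsCyclicMap

/-- If the finite set `X ⊆ S¹` contains no antipodal pair, then for `r = 1/2` every point
of `X` is either periodic under `f_{1/2}` or not in the image of `f_{1/2}`: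
`f_{1/2}(f_{1/2}(X)) = f_{1/2}(X)` and every point of the image is periodic. -/
theorem half_system_levels
    (X : Finset (AddCircle (1:ℝ)))
    (hanti : ∀ x ∈ X, ∀ y ∈ X, cdist x y ≠ 1/2)
    (f : AddCircle (1:ℝ) → AddCircle (1:ℝ)) (hf : IsCyclicMap X (1/2) f) :
    Finset.image f (Finset.image f X) = Finset.image f X ∧
    ∀ x ∈ Finset.image f X, ∃ m, 1 ≤ m ∧ f^[m] x = x := by
  have hmaps : MapsTo f (f '' X) (f '' X) := by
    rintro _ ⟨z, hz, rfl⟩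
    exact mem_image_of_mem f (hf z hz).1
  have hinj := hf.injOn_image hanti
  have hfin : (f '' X).Finite := X.finite_toSet.image f
  refine ⟨?_, fun x hx => ?_⟩
  · exact_mod_cast ((hfin.injOn_iff_bijOn_of_mapsTo hmaps).1 hinj).image_eq
  · obtain ⟨m, hm, hperiodic⟩ :=
      hinj.mem_periodicPts_of_mapsTo hfin hmaps (by exact_mod_cast hx)
    exact ⟨m, hm, hperiodic⟩
end
end
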